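/- Let φ : ℝ → ℂ be continuous with φ(0) = 1, nonvanishing, satisfying φ(2t) = φ(t)³ conj(φ(t)), and with second-order expansion φ(t) = 1 − t²/2 + o(t²) near 0. Then φ(t) = exp(−t²/2) for all t ∈ ℝ. -/

import Mathlib

/-!
Dividing by the Gaussian `g t = exp (-t²/2)`, which solves the same functional equation, leaves
`h = φ / g` with `h (2t) = h t ^ 3 * conj (h t)` and `h t = 1 + o(t²)`. Then `log ‖h‖` is
multiplied by `4 = 2²` under doubling `t` and is `o(t²)`, so it vanishes; hence `conj h = h⁻¹`
and `h (2t) = h t ^ 2`, so `h t = h (t / 2ⁿ) ^ 2ⁿ`, which tends to `1` because `h - 1 = o(t)`.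
-/

open Filter Topology Asymptotics Complex ComplexConjugate

theorem tendsto_div_two_pow_nhds_zero (t : ℝ) :
    Tendsto (fun n : ℕ => t / 2 ^ n) atTop (𝓝 0) :=
  tendsto_const_nhds.div_atTop (tendsto_pow_atTop_atTop_of_one_lt one_lt_two)

theorem eq_zero_of_forall_pos_norm_le_mul {E : Type*} [NormedAddCommGroup E] {x : E} {c : ℝ}
    (h : ∀ ε > 0, ‖x‖ ≤ ε * c) : x = 0 := by
  have hlim : Tendsto (fun ε : ℝ => ε * c) (𝓝[>] 0) (𝓝 0) := by
    simpa using (tendsto_id.mul_const c).mono_left (nhdsWithin_le_nhds (a := (0:ℝ)))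
  exact norm_le_zero_iff.1 (ge_of_tendsto hlim (eventually_nhdsWithin_of_forall h))

theorem norm_pow_sub_one_le {R : Type*} [SeminormedRing R] [NormOneClass R] {a : R}
    (ha : ‖a‖ ≤ 1) (m : ℕ) : ‖a ^ m - 1‖ ≤ m * ‖a - 1‖ := by
  induction m with
  | zero => simp
  | succ m ih =>
    calc ‖a ^ (m + 1) - 1‖ = ‖a ^ m * (a - 1) + (a ^ m - 1)‖ := by
          rw [pow_succ, mul_sub, mul_one]; abel_nf
      _ ≤ ‖a ^ m‖ * ‖a - 1‖ + m * ‖a - 1‖ :=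
        (norm_add_le _ _).trans (add_le_add (norm_mul_le _ _) ih)
      _ ≤ 1 * ‖a - 1‖ + m * ‖a - 1‖ := by
        gcongr; exact (norm_pow_le _ _).trans (pow_le_one₀ (norm_nonneg _) ha)
      _ = (m + 1 : ℕ) * ‖a - 1‖ := by push_cast; ring

theorem div_two_pow_eq_two_mul (t : ℝ) (n : ℕ) : t / 2 ^ n = 2 * (t / 2 ^ (n + 1)) := by
  rw [pow_succ]; field_simp

theorem eq_zero_of_map_two_mul_of_isLittleO {E : Type*} [NormedAddCommGroup E] [NormedSpace ℝ E]
    {f : ℝ → E} {k : ℕ} (hf : ∀ t, f (2 * t) = (2 ^ k : ℝ) • f t)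
    (ho : f =o[𝓝 0] (· ^ k)) (t : ℝ) : f t = 0 := by
  have hiter : ∀ n : ℕ, f t = ((2 ^ k : ℝ) ^ n) • f (t / 2 ^ n) := by
    intro n
    induction n with
    | zero => simp
    | succ n ih =>
      rw [ih, div_two_pow_eq_two_mul t n, hf, ← mul_smul, ← pow_succ]
  refine eq_zero_of_forall_pos_norm_le_mul (c := |t| ^ k) fun ε hε => ?_
  obtain ⟨n, hn⟩ := ((tendsto_div_two_pow_nhds_zero t).eventually (ho.def hε)).exists
  calc ‖f t‖ = (2 ^ k) ^ n * ‖f (t / 2 ^ n)‖ := by rw [hiter n, norm_smul]; simp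
    _ ≤ (2 ^ k) ^ n * (ε * ‖(t / 2 ^ n) ^ k‖) := by gcongr
    _ = ε * |t| ^ k := by
      rw [norm_pow, norm_div, ← pow_mul, mul_comm k, pow_mul, mul_left_comm, ← mul_pow,
        Real.norm_eq_abs, norm_pow, Real.norm_two, mul_div_cancel₀ _ (by positivity)]

theorem eq_one_of_map_two_mul_eq_sq {R : Type*} [NormedRing R] [NormOneClass R]
    {u : ℝ → R} (hu : ∀ t, ‖u t‖ ≤ 1) (hsq : ∀ t, u (2 * t) = u t ^ 2)
    (ho : (fun t => u t - 1) =o[𝓝 0] id) (t : ℝ) : u t = 1 := by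
  have hiter : ∀ n : ℕ, u t = u (t / 2 ^ n) ^ 2 ^ n := by
    intro n
    induction n with
    | zero => simp
    | succ n ih =>
      rw [ih, div_two_pow_eq_two_mul t n, hsq, ← pow_mul, ← pow_succ']
  refine sub_eq_zero.1 <| eq_zero_of_forall_pos_norm_le_mul (c := |t|) fun ε hε => ?_
  obtain ⟨n, hn⟩ := ((tendsto_div_two_pow_nhds_zero t).eventually (ho.def hε)).exists
  calc ‖u t - 1‖ ≤ (2 ^ n : ℕ) * ‖u (t / 2 ^ n) - 1‖ := by
        rw [hiter n]; exact norm_pow_sub_one_le (hu _) _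
    _ ≤ 2 ^ n * (ε * ‖t / 2 ^ n‖) := by push_cast; gcongr; exact hn
    _ = ε * |t| := by
      rw [norm_div, Real.norm_of_nonneg (by positivity : (0 : ℝ) ≤ 2 ^ n), Real.norm_eq_abs]
      field_simp

theorem isLittleO_pow_of_tendsto_div_pow_nhdsNE {f : ℝ → ℂ} {k : ℕ} (hf0 : f 0 = 0)
    (hf : Tendsto (fun t : ℝ => f t / (t : ℂ) ^ k) (𝓝[≠] 0) (𝓝 0)) :
    f =o[𝓝 0] (· ^ k) := by
  have ho : f =o[𝓝[≠] 0] fun t : ℝ => (t : ℂ) ^ k :=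
    (isLittleO_iff_tendsto' (eventually_nhdsWithin_of_forall fun t ht h => by
      exact absurd (pow_eq_zero_iff'.1 h).1 (ofReal_ne_zero.2 ht))).2 hf
  rw [← nhdsNE_sup_pure]
  exact (ho.sup (isLittleO_pure.2 hf0)).trans_isBigO (isBigO_of_le _ fun t => by simp)

theorem isLittleO_exp_neg_sq_half_sub_one_add_sq_half :
    (fun t : ℝ => exp (-(t : ℂ) ^ 2 / 2) - 1 + (t : ℂ) ^ 2 / 2) =o[𝓝 0] (· ^ 2) := by
  have hO :
      (fun t : ℝ => exp (-(t : ℂ) ^ 2 / 2) - 1 + (t : ℂ) ^ 2 / 2) =O[𝓝 0] (· ^ 4) := by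
    refine IsBigO.of_bound 1 ?_
    filter_upwards [Metric.closedBall_mem_nhds (0 : ℝ) one_pos] with t ht
    have ht1 : |t| ≤ 1 := by simpa using ht
    have hx : ‖-(t : ℂ) ^ 2 / 2‖ ≤ 1 := by
      simp only [norm_div, norm_neg, norm_pow, norm_real, Real.norm_eq_abs, RCLike.norm_ofNat]
      nlinarith [abs_nonneg t]
    calc ‖exp (-(t : ℂ) ^ 2 / 2) - 1 + (t : ℂ) ^ 2 / 2‖
        = ‖exp (-(t : ℂ) ^ 2 / 2) - 1 - -(t : ℂ) ^ 2 / 2‖ := by ring_nf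
      _ ≤ ‖-(t : ℂ) ^ 2 / 2‖ ^ 2 := norm_exp_sub_one_sub_id_le hx
      _ ≤ 1 * ‖t ^ 4‖ := by
        simp only [norm_div, norm_neg, norm_pow, norm_real, Real.norm_eq_abs, RCLike.norm_ofNat]
        nlinarith [pow_nonneg (abs_nonneg t) 4]
  exact hO.trans_isLittleO (isLittleO_pow_pow (by norm_num))

theorem isLittleO_div_exp_neg_sq_half_sub_one {φ : ℝ → ℂ}
    (hφ : (fun t : ℝ => φ t - 1 + (t : ℂ) ^ 2 / 2) =o[𝓝 0] (· ^ 2)) :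
    (fun t : ℝ => φ t / exp (-(t : ℂ) ^ 2 / 2) - 1) =o[𝓝 0] (· ^ 2) := by
  have hinv : (fun t : ℝ => (exp (-(t : ℂ) ^ 2 / 2))⁻¹) =O[𝓝 0] (fun _ => (1 : ℝ)) :=
    Tendsto.isBigO_one ℝ (c := 1) <| by
      have hc : Continuous fun t : ℝ => (exp (-(t : ℂ) ^ 2 / 2))⁻¹ := by
        fun_prop (disch := exact fun _ => exp_ne_zero _)
      simpa using hc.tendsto 0
  refine ((hφ.sub isLittleO_exp_neg_sq_half_sub_one_add_sq_half).mul_isBigO hinv).congr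
    (fun t => ?_) (fun t => mul_one _)
  field_simp [exp_ne_zero]
  ring

def SatisfiesDoublingEq (u : ℝ → ℂ) : Prop :=
  ∀ t, u (2 * t) = u t ^ 3 * conj (u t)

namespace SatisfiesDoublingEq

variable {u v : ℝ → ℂ}

theorem div (hu : SatisfiesDoublingEq u) (hv : SatisfiesDoublingEq v) :
    SatisfiesDoublingEq (u / v) := fun t => by
  simp only [Pi.div_apply, hu t, hv t, map_div₀, div_pow, mul_div_mul_comm]

theorem gaussian : SatisfiesDoublingEq fun t => exp (-(t : ℂ) ^ 2 / 2) := fun t => by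
  rw [← exp_conj, ← exp_nat_mul, ← exp_add]
  refine congrArg exp ?_
  simp only [map_div₀, map_neg, map_pow, conj_ofReal, map_ofNat]
  push_cast
  ring

theorem norm_eq_one_of_isLittleO (hu : SatisfiesDoublingEq u) (hne : ∀ t, u t ≠ 0)
    (ho : (fun t => u t - 1) =o[𝓝 0] (· ^ 2)) (t : ℝ) : ‖u t‖ = 1 := by
  have hlog_eq : ∀ t, Real.log ‖u (2 * t)‖ = (2 ^ 2 : ℝ) • Real.log ‖u t‖ := by
    intro t
    rw [hu t, norm_mul, norm_pow, RCLike.norm_conj, ← pow_succ, Real.log_pow, smul_eq_mul]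
    norm_num
  have hnorm_lim : Tendsto (fun t => ‖u t‖) (𝓝 0) (𝓝 1) := by
    have := tendsto_sub_nhds_zero_iff.1 <|
      ho.trans_tendsto (by simpa using (continuous_pow 2).tendsto (0 : ℝ))
    simpa using this.norm
  have hlog_o : (fun t => Real.log ‖u t‖) =o[𝓝 0] (· ^ 2) := by
    have hlog : Real.log =O[𝓝 1] (· - 1) := by
      simpa using (Real.hasDerivAt_log one_ne_zero).isBigO_sub
    have hnorm : (fun t => ‖u t‖ - 1) =O[𝓝 0] (fun t => u t - 1) :=
      isBigO_of_le _ fun t => by simpa using abs_norm_sub_norm_le (u t) 1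
    exact ((hlog.comp_tendsto hnorm_lim).trans hnorm).trans_isLittleO ho
  exact Real.eq_one_of_pos_of_log_eq_zero (norm_pos_iff.2 (hne t))
    (eq_zero_of_map_two_mul_of_isLittleO hlog_eq hlog_o t)

theorem eq_one_of_isLittleO (hu : SatisfiesDoublingEq u) (hne : ∀ t, u t ≠ 0)
    (ho : (fun t => u t - 1) =o[𝓝 0] (· ^ 2)) (t : ℝ) : u t = 1 := by
  have hnorm := hu.norm_eq_one_of_isLittleO hne ho
  have hsq : ∀ t, u (2 * t) = u t ^ 2 := fun t => by
    rw [hu t, ← inv_eq_conj (hnorm t), pow_succ, mul_assoc, mul_inv_cancel₀ (hne t), mul_one]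
  exact eq_one_of_map_two_mul_eq_sq (fun t => (hnorm t).le) hsq
    (ho.trans (isLittleO_pow_id one_lt_two)) t

end SatisfiesDoublingEq

theorem charFun_funEq_is_gaussian_charFun_general
    (φ : ℝ → ℂ) (h0 : φ 0 = 1)
    (hne : ∀ t : ℝ, φ t ≠ 0)
    (heq : ∀ t : ℝ, φ (2 * t) = φ t ^ 3 * starRingEnd ℂ (φ t))
    (hexp : Filter.Tendsto (fun t : ℝ => (φ t - 1 + (t : ℂ) ^ 2 / 2) / (t : ℂ) ^ 2)
      (nhdsWithin 0 {0}ᶜ) (nhds 0)) :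
    ∀ t : ℝ, φ t = Complex.exp (-(t : ℂ) ^ 2 / 2) := by
  have hφ : (fun t : ℝ => φ t - 1 + (t : ℂ) ^ 2 / 2) =o[𝓝 0] (· ^ 2) :=
    isLittleO_pow_of_tendsto_div_pow_nhdsNE (by simp [h0]) hexp
  have hquot := SatisfiesDoublingEq.div heq SatisfiesDoublingEq.gaussian
  intro t
  rw [← div_eq_one_iff_eq (exp_ne_zero _)]
  exact hquot.eq_one_of_isLittleO (fun t => div_ne_zero (hne t) (exp_ne_zero _))
    (isLittleO_div_exp_neg_sq_half_sub_one hφ) t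

theorem charFun_funEq_is_gaussian_charFun
    (φ : ℝ → ℂ) (hcont : Continuous φ) (h0 : φ 0 = 1)
    (hne : ∀ t : ℝ, φ t ≠ 0)
    (heq : ∀ t : ℝ, φ (2 * t) = φ t ^ 3 * starRingEnd ℂ (φ t))
    (hexp : Filter.Tendsto (fun t : ℝ => (φ t - 1 + (t : ℂ) ^ 2 / 2) / (t : ℂ) ^ 2)
      (nhdsWithin 0 {0}ᶜ) (nhds 0)) :
    ∀ t : ℝ, φ t = Complex.exp (-(t : ℂ) ^ 2 / 2) :=
  charFun_funEq_is_gaussian_charFun_general φ h0 hne heq hexp
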